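/- arXiv:1912.01750 — 2 statements merged into one kernel-verified Lean document; each statement's English description precedes it below -/
import Mathlib

section
/- Let n ≥ 3 and m be integers with gcd(n−1, m) = 1. Let [E] : ℤ² → ℤ² be the group endomorphism [E](x, y) = (n·x, m·x + n·y). Then the cokernel ℤ²/(id − [E])(ℤ²) is isomorphic as an abelian group to ℤ/(n−1)²ℤ. -/
/-- The endomorphism of `ℤ²` given by tensoring with the bundle `E` of class `n + mλ`:
`[E](x, y) = (n·x, m·x + n·y)`. -/
noncomputable def tensorE (n m : ℤ) : (ℤ × ℤ) →+ (ℤ × ℤ) :=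
  AddMonoidHom.mk' (fun p => (n * p.1, m * p.1 + n * p.2)) (by
    intro p q
    simp only [Prod.fst_add, Prod.snd_add, Prod.mk_add_mk, Prod.mk.injEq]
    constructor <;> ring)

/-!
`id - [E]` is again of the form `[E']`, with matrix `(a 0; b a)` for `a = 1 - n`, `b = -m`, and
`a`, `b` are coprime. If `s a + t b = 1`, the unimodular matrix `(s t; -b a)` row-reduces `(a 0; b a)`
to `(1 t a; 0 a²)`, and one column operation brings this to `diag(1, a²)`. Hence the cokernel is
`ℤ/a²`, detected by the second row `(x, y) ↦ a y - b x mod a²`.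
-/

theorem tensorE_apply (a b : ℤ) (p : ℤ × ℤ) : tensorE a b p = (a * p.1, b * p.1 + a * p.2) := rfl

theorem id_sub_tensorE (n m : ℤ) : AddMonoidHom.id (ℤ × ℤ) - tensorE n m = tensorE (1 - n) (-m) := by
  ext p <;> simp only [AddMonoidHom.sub_apply, AddMonoidHom.id_apply, tensorE_apply,
    Prod.fst_sub, Prod.snd_sub] <;> ring

noncomputable def tensorECokernelMap (a b : ℤ) : (ℤ × ℤ) →+ ZMod (a ^ 2).toNat :=
  AddMonoidHom.mk' (fun p => ((a * p.2 - b * p.1 : ℤ) : ZMod (a ^ 2).toNat)) (by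
    intro p q
    simp only [Prod.fst_add, Prod.snd_add]
    push_cast
    ring)

theorem tensorECokernelMap_apply (a b : ℤ) (p : ℤ × ℤ) :
    tensorECokernelMap a b p = ((a * p.2 - b * p.1 : ℤ) : ZMod (a ^ 2).toNat) := rfl

theorem tensorECokernelMap_eq_zero_iff (a b : ℤ) (p : ℤ × ℤ) :
    tensorECokernelMap a b p = 0 ↔ a ^ 2 ∣ a * p.2 - b * p.1 := by
  rw [tensorECokernelMap_apply, ZMod.intCast_zmod_eq_zero_iff_dvd,
    Int.toNat_of_nonneg (sq_nonneg a)]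

section Coprime

variable {a b : ℤ}

theorem tensorECokernelMap_surjective (h : IsCoprime a b) :
    Function.Surjective (tensorECokernelMap a b) := by
  obtain ⟨s, t, hst⟩ := h
  intro z
  obtain ⟨k, rfl⟩ := ZMod.intCast_surjective z
  refine ⟨(-(t * k), s * k), ?_⟩
  rw [tensorECokernelMap_apply]
  congr 1
  linear_combination k * hst

theorem range_tensorE_eq_ker (h : IsCoprime a b) :
    (tensorE a b).range = (tensorECokernelMap a b).ker := by
  ext ⟨x, y⟩
  rw [AddMonoidHom.mem_ker, tensorECokernelMap_eq_zero_iff]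
  constructor
  · rintro ⟨⟨u, v⟩, huv⟩
    simp only [tensorE_apply, Prod.mk.injEq] at huv
    obtain ⟨rfl, rfl⟩ := huv
    exact ⟨v, by ring⟩
  · rintro ⟨k, hk⟩
    obtain ⟨s, t, hst⟩ := h
    -- the preimage of `(x, y)` read off from the reduction to `diag(1, a²)`
    refine ⟨(s * x + t * y - t * a * k, k), ?_⟩
    simp only [tensorE_apply, Prod.mk.injEq]
    constructor
    · linear_combination x * hst + t * hk
    · linear_combination (y - a * k) * hst - s * hk

noncomputable def quotientRangeTensorEEquiv (h : IsCoprime a b) :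
    (ℤ × ℤ) ⧸ (tensorE a b).range ≃+ ZMod (a ^ 2).toNat :=
  (QuotientAddGroup.quotientAddEquivOfEq (range_tensorE_eq_ker h)).trans
    (QuotientAddGroup.quotientKerEquivOfSurjective _ (tensorECokernelMap_surjective h))

end Coprime

theorem stmt0_general (n m : ℤ) (hgcd : Int.gcd (n - 1) m = 1) :
    Nonempty (((ℤ × ℤ) ⧸ (AddMonoidHom.id (ℤ × ℤ) - tensorE n m).range) ≃+
      ZMod (((n - 1) ^ 2).toNat)) := by
  have hcop : IsCoprime (1 - n) (-m) := by
    rw [show 1 - n = -(n - 1) by ring]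
    exact (Int.isCoprime_iff_gcd_eq_one.mpr hgcd).neg_neg
  rw [id_sub_tensorE, show (n - 1) ^ 2 = (1 - n) ^ 2 by ring]
  exact ⟨quotientRangeTensorEEquiv hcop⟩

/-- for integers `n ≥ 3` and `m` with `gcd(n-1, m) = 1`, the cokernel
`ℤ² / (id - [E])(ℤ²)` is isomorphic to `ℤ/(n-1)²ℤ`. -/
theorem stmt0 (n m : ℤ) (hn : 3 ≤ n) (hgcd : Int.gcd (n - 1) m = 1) :
    Nonempty (((ℤ × ℤ) ⧸ (AddMonoidHom.id (ℤ × ℤ) - tensorE n m).range) ≃+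
      ZMod (((n - 1) ^ 2).toNat)) :=
  stmt0_general n m hgcd
end

section
/- For all i, k ∈ {1, 2}, the subspace p_i·M·p_k of M is zero; that is, p_i·(ξ·p_k) = 0 for every ξ ∈ M. -/
/-- The symmetric group on three letters. -/
abbrev S3 := Equiv.Perm (Fin 3)

/-- The 12-dimensional space `M` of functions `S₃ → ℂ²`, modelling the crossed
product correspondence `ℂ² ⋊ S₃` over `ℂ[S₃]`. -/
abbrev CrossedMod := S3 → (Fin 2 → ℂ)

/-- `p₁ = (1/6)·Σ_{g∈S₃} g`. -/
noncomputable def p1 : MonoidAlgebra ℂ S3 :=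
  (6 : ℂ)⁻¹ • ∑ g : S3, MonoidAlgebra.single g 1

/-- `p₂ = (1/6)·Σ_{g∈S₃} sgn(g)·g`. -/
noncomputable def p2 : MonoidAlgebra ℂ S3 :=
  (6 : ℂ)⁻¹ • ∑ g : S3, MonoidAlgebra.single g (((Equiv.Perm.sign g : ℤ) : ℂ))

/-- The character `χ` of the 2-dimensional irreducible representation of `S₃`. -/
noncomputable def chi (g : S3) : ℂ :=
  if g = 1 then 2 else if Equiv.Perm.sign g = 1 then -1 else 0

/-- `p₃ = (1/3)·Σ_{g∈S₃} χ(g)·g`. -/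
noncomputable def p3 : MonoidAlgebra ℂ S3 :=
  (3 : ℂ)⁻¹ • ∑ g : S3, MonoidAlgebra.single g (chi g)

/-- Left multiplication by `h ∈ ℂ[S₃]` on `M`: `(h·ξ)(t) = Σ_u h(u)·σ(u)(ξ(u⁻¹t))`. -/
noncomputable def crossedLeftMul (σ : S3 →* GL (Fin 2) ℂ) (h : MonoidAlgebra ℂ S3) :
    CrossedMod →ₗ[ℂ] CrossedMod where
  toFun ξ := fun t => ∑ u : S3, h.coeff u • (σ u : Matrix (Fin 2) (Fin 2) ℂ).mulVec (ξ (u⁻¹ * t))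
  map_add' ξ η := by
    funext t
    simp only [Pi.add_apply, Matrix.mulVec_add, smul_add, Finset.sum_add_distrib]
  map_smul' c ξ := by
    funext t
    simp only [Pi.smul_apply, Matrix.mulVec_smul, Finset.smul_sum, RingHom.id_apply]
    exact Finset.sum_congr rfl fun u _ => smul_comm _ _ _

/-- Right multiplication by `f ∈ ℂ[S₃]` on `M`: `(ξ·f)(t) = Σ_u f(u⁻¹t)·ξ(u)`. -/
noncomputable def crossedRightMul (f : MonoidAlgebra ℂ S3) : CrossedMod →ₗ[ℂ] CrossedMod where
  toFun ξ := fun t => ∑ u : S3, f.coeff (u⁻¹ * t) • ξ u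
  map_add' ξ η := by
    funext t
    simp [smul_add, Finset.sum_add_distrib]
  map_smul' c ξ := by
    funext t
    simp [Finset.smul_sum, smul_comm c]

/- ### Auxiliary lemmas -/

lemma p1_apply' (u : S3) : p1.coeff u = 6⁻¹ := by
  rw [p1, MonoidAlgebra.coeff_smul_apply, MonoidAlgebra.coeff_sum, Finsupp.finset_sum_apply]
  simp [MonoidAlgebra.coeff_single, Finsupp.single_apply]

lemma p2_apply' (u : S3) : p2.coeff u = 6⁻¹ * ((Equiv.Perm.sign u : ℤ) : ℂ) := by
  rw [p2, MonoidAlgebra.coeff_smul_apply, MonoidAlgebra.coeff_sum, Finsupp.finset_sum_apply]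
  simp [MonoidAlgebra.coeff_single, Finsupp.single_apply]

lemma univ_eq_S3 : (Finset.univ : Finset S3) =
    {1, finRotate 3, finRotate 3 * finRotate 3, Equiv.swap 0 1,
     Equiv.swap 0 1 * finRotate 3, Equiv.swap 0 1 * (finRotate 3 * finRotate 3)} := by
  decide

lemma sum_sigma (ω : ℂ) (hω : ω ^ 2 + ω + 1 = 0) (σ : S3 →* GL (Fin 2) ℂ)
    (ht : (σ (Equiv.swap 0 1) : Matrix (Fin 2) (Fin 2) ℂ) = !![0, 1; 1, 0])
    (hs : (σ (finRotate 3) : Matrix (Fin 2) (Fin 2) ℂ) = !![ω, 0; 0, ω ^ 2]) :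
    ∑ u : S3, (σ u : Matrix (Fin 2) (Fin 2) ℂ) = 0 := by
  have hω3 : ω ^ 3 = 1 := by linear_combination (ω - 1) * hω
  rw [univ_eq_S3, Finset.sum_insert (by decide), Finset.sum_insert (by decide),
    Finset.sum_insert (by decide), Finset.sum_insert (by decide),
    Finset.sum_insert (by decide), Finset.sum_singleton]
  simp only [map_mul, map_one, Units.val_mul, Units.val_one, ht, hs]
  ext i j
  fin_cases i <;> fin_cases j <;>
    simp [Matrix.mul_apply, Fin.sum_univ_succ]
  all_goals (first
    | linear_combination hω
    | linear_combination hω + ω * hω3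
    | linear_combination -ω * hω3
    | linear_combination ω * hω3)

lemma sum_sign_sigma (ω : ℂ) (hω : ω ^ 2 + ω + 1 = 0) (σ : S3 →* GL (Fin 2) ℂ)
    (ht : (σ (Equiv.swap 0 1) : Matrix (Fin 2) (Fin 2) ℂ) = !![0, 1; 1, 0])
    (hs : (σ (finRotate 3) : Matrix (Fin 2) (Fin 2) ℂ) = !![ω, 0; 0, ω ^ 2]) :
    ∑ u : S3, ((Equiv.Perm.sign u : ℤ) : ℂ) • (σ u : Matrix (Fin 2) (Fin 2) ℂ) = 0 := by
  have hω3 : ω ^ 3 = 1 := by linear_combination (ω - 1) * hω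
  rw [univ_eq_S3, Finset.sum_insert (by decide), Finset.sum_insert (by decide),
    Finset.sum_insert (by decide), Finset.sum_insert (by decide),
    Finset.sum_insert (by decide), Finset.sum_singleton]
  have e1 : Equiv.Perm.sign (1 : S3) = 1 := by decide
  have e2 : Equiv.Perm.sign (finRotate 3) = 1 := by decide
  have e3 : Equiv.Perm.sign (finRotate 3 * finRotate 3) = 1 := by decide
  have e4 : Equiv.Perm.sign (Equiv.swap 0 1 : S3) = -1 := by decide
  have e5 : Equiv.Perm.sign (Equiv.swap 0 1 * finRotate 3) = -1 := by decide
  have e6 : Equiv.Perm.sign (Equiv.swap 0 1 * (finRotate 3 * finRotate 3)) = -1 := by decide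
  simp only [map_mul, map_one, Units.val_mul, Units.val_one, ht, hs, e1, e2, e3, e4, e5, e6]
  ext i j
  fin_cases i <;> fin_cases j <;>
    simp [Matrix.mul_apply, Fin.sum_univ_succ]
  all_goals (first
    | linear_combination hω
    | linear_combination hω + ω * hω3
    | linear_combination -ω * hω3
    | linear_combination ω * hω3
    | linear_combination -hω - ω * hω3
    | linear_combination -hω
    | linear_combination 2 * hω + 2 * ω * hω3
    | linear_combination -2 * hω - 2 * ω * hω3
    | linear_combination -2 * hω - ω * hω3
    | linear_combination 2 * hω + ω * hω3)

lemma sum_mulVec' {ι : Type*} (s : Finset ι) (A : ι → Matrix (Fin 2) (Fin 2) ℂ)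
    (x : Fin 2 → ℂ) : (∑ i ∈ s, A i).mulVec x = ∑ i ∈ s, (A i).mulVec x := by
  classical
  induction s using Finset.cons_induction with
  | empty => simp [Matrix.zero_mulVec]
  | cons i s hi ih => rw [Finset.sum_cons, Finset.sum_cons, Matrix.add_mulVec, ih]

lemma mulVec_sum' (A : Matrix (Fin 2) (Fin 2) ℂ) {ι : Type*} (s : Finset ι)
    (x : ι → Fin 2 → ℂ) : A.mulVec (∑ i ∈ s, x i) = ∑ i ∈ s, A.mulVec (x i) := by
  rw [← Matrix.mulVecLin_apply, map_sum]
  simp [Matrix.mulVecLin_apply]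

lemma main_aux (σ : S3 →* GL (Fin 2) ℂ) (p q : MonoidAlgebra ℂ S3)
    (h : ∀ v t : S3,
      ∑ u : S3, (p.coeff u * q.coeff (v⁻¹ * (u⁻¹ * t))) • (σ u : Matrix (Fin 2) (Fin 2) ℂ) = 0)
    (ξ : CrossedMod) : crossedLeftMul σ p (crossedRightMul q ξ) = 0 := by
  funext t
  show ∑ u : S3, p.coeff u • (σ u : Matrix (Fin 2) (Fin 2) ℂ).mulVec
      (∑ v : S3, q.coeff (v⁻¹ * (u⁻¹ * t)) • ξ v) = 0
  calc ∑ u : S3, p.coeff u • (σ u : Matrix (Fin 2) (Fin 2) ℂ).mulVec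
        (∑ v : S3, q.coeff (v⁻¹ * (u⁻¹ * t)) • ξ v)
      = ∑ u : S3, ∑ v : S3,
          (p.coeff u * q.coeff (v⁻¹ * (u⁻¹ * t))) • (σ u : Matrix (Fin 2) (Fin 2) ℂ).mulVec (ξ v) := by
        refine Finset.sum_congr rfl fun u _ => ?_
        rw [mulVec_sum', Finset.smul_sum]
        refine Finset.sum_congr rfl fun v _ => ?_
        rw [Matrix.mulVec_smul, smul_smul]
    _ = ∑ v : S3, (∑ u : S3,
          (p.coeff u * q.coeff (v⁻¹ * (u⁻¹ * t))) • (σ u : Matrix (Fin 2) (Fin 2) ℂ)).mulVec (ξ v) := by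
        rw [Finset.sum_comm]
        refine Finset.sum_congr rfl fun v _ => ?_
        rw [sum_mulVec']
        exact Finset.sum_congr rfl fun u _ => (Matrix.smul_mulVec _ _ _).symm
    _ = 0 := by
        simp [h _ t, Matrix.zero_mulVec]

/-- `p_i·M·p_k = 0` for `i, k ∈ {1, 2}`. -/
theorem stmt9 (ω : ℂ) (hω1 : ω ≠ 1) (hω : ω ^ 2 + ω + 1 = 0)
    (σ : S3 →* GL (Fin 2) ℂ)
    (ht : (σ (Equiv.swap 0 1) : Matrix (Fin 2) (Fin 2) ℂ) = !![0, 1; 1, 0])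
    (hs : (σ (finRotate 3) : Matrix (Fin 2) (Fin 2) ℂ) = !![ω, 0; 0, ω ^ 2]) :
    ∀ p ∈ ({p1, p2} : Set (MonoidAlgebra ℂ S3)),
      ∀ q ∈ ({p1, p2} : Set (MonoidAlgebra ℂ S3)),
        ∀ ξ : CrossedMod, crossedLeftMul σ p (crossedRightMul q ξ) = 0 := by
  have key1 := sum_sigma ω hω σ ht hs
  have key2 := sum_sign_sigma ω hω σ ht hs
  have hmul : ∀ a b : S3, ((Equiv.Perm.sign (a * b) : ℤ) : ℂ)
      = ((Equiv.Perm.sign a : ℤ) : ℂ) * ((Equiv.Perm.sign b : ℤ) : ℂ) := by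
    intro a b; simp [map_mul]
  have hinv : ∀ a : S3, ((Equiv.Perm.sign a⁻¹ : ℤ) : ℂ) = ((Equiv.Perm.sign a : ℤ) : ℂ) := by
    intro a; simp
  have hsq : ∀ a : S3, ((Equiv.Perm.sign a : ℤ) : ℂ) * ((Equiv.Perm.sign a : ℤ) : ℂ) = 1 := by
    intro a
    rcases Int.units_eq_one_or (Equiv.Perm.sign a) with h | h <;> simp [h]
  intro p hp q hq ξ
  apply main_aux
  intro v t
  rcases hp with rfl | hp
  · rcases hq with rfl | hq
    · -- p1, p1
      simp only [p1_apply']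
      rw [← Finset.smul_sum, key1, smul_zero]
    · rcases hq with rfl
      -- p1, p2
      simp only [p1_apply', p2_apply', hmul, hinv]
      calc ∑ u : S3, ((6 : ℂ)⁻¹ * (6⁻¹ * (((Equiv.Perm.sign v : ℤ) : ℂ) *
              (((Equiv.Perm.sign u : ℤ) : ℂ) * ((Equiv.Perm.sign t : ℤ) : ℂ)))))
              • (σ u : Matrix (Fin 2) (Fin 2) ℂ)
          = ∑ u : S3, ((6 : ℂ)⁻¹ * 6⁻¹ * ((Equiv.Perm.sign v : ℤ) : ℂ) *
              ((Equiv.Perm.sign t : ℤ) : ℂ)) •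
              (((Equiv.Perm.sign u : ℤ) : ℂ) • (σ u : Matrix (Fin 2) (Fin 2) ℂ)) := by
            refine Finset.sum_congr rfl fun u _ => ?_
            rw [smul_smul]; congr 1; ring
        _ = 0 := by rw [← Finset.smul_sum, key2, smul_zero]
  · rcases hp with rfl
    rcases hq with rfl | hq
    · -- p2, p1
      simp only [p1_apply', p2_apply']
      calc ∑ u : S3, ((6 : ℂ)⁻¹ * ((Equiv.Perm.sign u : ℤ) : ℂ) * 6⁻¹)
              • (σ u : Matrix (Fin 2) (Fin 2) ℂ)
          = ∑ u : S3, ((6 : ℂ)⁻¹ * 6⁻¹) •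
              (((Equiv.Perm.sign u : ℤ) : ℂ) • (σ u : Matrix (Fin 2) (Fin 2) ℂ)) := by
            refine Finset.sum_congr rfl fun u _ => ?_
            rw [smul_smul]; congr 1; ring
        _ = 0 := by rw [← Finset.smul_sum, key2, smul_zero]
    · rcases hq with rfl
      -- p2, p2
      simp only [p1_apply', p2_apply', hmul, hinv]
      calc ∑ u : S3, ((6 : ℂ)⁻¹ * ((Equiv.Perm.sign u : ℤ) : ℂ) *
              (6⁻¹ * (((Equiv.Perm.sign v : ℤ) : ℂ) *
              (((Equiv.Perm.sign u : ℤ) : ℂ) * ((Equiv.Perm.sign t : ℤ) : ℂ)))))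
              • (σ u : Matrix (Fin 2) (Fin 2) ℂ)
          = ∑ u : S3, ((6 : ℂ)⁻¹ * 6⁻¹ * ((Equiv.Perm.sign v : ℤ) : ℂ) *
              ((Equiv.Perm.sign t : ℤ) : ℂ)) • (σ u : Matrix (Fin 2) (Fin 2) ℂ) := by
            refine Finset.sum_congr rfl fun u _ => ?_
            congr 1
            linear_combination ((6 : ℂ)⁻¹ * 6⁻¹ * ((Equiv.Perm.sign v : ℤ) : ℂ) *
              ((Equiv.Perm.sign t : ℤ) : ℂ)) * hsq u
        _ = 0 := by rw [← Finset.smul_sum, key1, smul_zero]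
end
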